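/- Let k_c : [0,∞)×[0,∞) → ℝ be continuous and symmetric (k_c(x,y) = k_c(y,x)), and let u : [0,∞) → ℝ be continuous and compactly supported. Define C(u)(x) = ∫_0^x ∫_{x−y}^∞ y · k_c(y,z) u(y) u(z) dz dy. Then C(u) is differentiable on (0,∞) and for every x > 0, (d/dx) C(u)(x) = −x · Q_c(u)(x); that is, the coagulation operator admits the conservative form x·Q_c(u) = −∂_x C(u). -/

import Mathlib

/-!
Clamping the arguments of `kc` and `u` to `[0, ∞)` makes the integrand
`W y z = y kc(y,z) u(y) u(z)` continuous on `ℝ²`, and it vanishes for `z ≥ M`. Splitting the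
inner integral at `0` gives
`C(b) = ∫₀ᵇ ∫₀^∞ W(y,z) dz dy − ∫₀ᵇ ∫₀^{b−y} W(y,z) dz dy`,
and Fubini on the triangle `0 < y < s ≤ b` (with `s = y + z`) turns the second term into
`∫₀ᵇ ∫₀ˢ W(y, s−y) dy ds`. Both terms are primitives of continuous functions, so
`C'(x) = x u(x) ∫₀^∞ kc(x,z) u(z) dz − ∫₀ˣ y kc(y,x−y) u(y) u(x−y) dy`.
By symmetry of `kc`, the last integrand without the weight `y` is invariant under `y ↦ x − y`,
which replaces `y` by `x/2`.
-/

open MeasureTheory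

/-- The coagulation operator:
`Q_c(u)(x) = (1/2)∫_0^x k_c(y, x−y) u(y) u(x−y) dy − u(x) ∫_0^∞ k_c(x,y) u(y) dy`. -/
noncomputable def Qc (kc : ℝ → ℝ → ℝ) (u : ℝ → ℝ) (x : ℝ) : ℝ :=
  (1 / 2) * (∫ y in (0:ℝ)..x, kc y (x - y) * u y * u (x - y))
    - u x * ∫ y in Set.Ioi (0:ℝ), kc x y * u y

/-- The conservative coagulation flux:
`C(u)(x) = ∫_0^x ∫_{x−y}^∞ y · k_c(y,z) u(y) u(z) dz dy`. -/
noncomputable def coagFlux (kc : ℝ → ℝ → ℝ) (u : ℝ → ℝ) (x : ℝ) : ℝ :=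
  ∫ y in (0:ℝ)..x, ∫ z in Set.Ioi (x - y), y * kc y z * u y * u z

open Set Filter Topology

theorem setIntegral_Ioi_eq_intervalIntegral_of_eq_zero {g : ℝ → ℝ} {M : ℝ} (hg : Continuous g)
    (hgM : ∀ z, M ≤ z → g z = 0) (t : ℝ) : ∫ z in Ioi t, g z = ∫ z in t..M, g z := by
  have hvanish : ∀ z ∈ Ioi M, g z = 0 := fun z hz => hgM z (le_of_lt hz)
  have hM : IntegrableOn g (Ioi M) :=
    integrableOn_zero.congr_fun (fun z hz => (hvanish z hz).symm) measurableSet_Ioi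
  rw [← intervalIntegral.integral_interval_add_Ioi' (hg.intervalIntegrable t M) hM,
    setIntegral_eq_zero_of_forall_eq_zero hvanish, add_zero]

theorem integral_id_mul_of_symm {φ : ℝ → ℝ} {a b : ℝ} (hφ : Continuous φ)
    (hsymm : ∀ y, φ (a + b - y) = φ y) :
    ∫ y in a..b, y * φ y = (a + b) / 2 * ∫ y in a..b, φ y := by
  have hreflect : ∫ y in a..b, y * φ y = ∫ y in a..b, (a + b - y) * φ y := by
    simpa [hsymm] using
      (intervalIntegral.integral_comp_sub_left (fun y => y * φ y) (a + b) (a := a) (b := b)).symm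
  have hsum : ∫ y in a..b, (y * φ y + (a + b - y) * φ y) = (a + b) * ∫ y in a..b, φ y := by
    rw [← intervalIntegral.integral_const_mul]
    congr 1 with y
    ring
  rw [intervalIntegral.integral_add (Continuous.intervalIntegrable (by fun_prop) a b)
    (Continuous.intervalIntegrable (by fun_prop) a b), ← hreflect] at hsum
  linarith

theorem integral_integral_swap_triangle {H : ℝ → ℝ → ℝ} (hH : Continuous (Function.uncurry H))
    {a b : ℝ} (hab : a ≤ b) :
    ∫ y in a..b, ∫ s in y..b, H y s = ∫ s in a..b, ∫ y in a..s, H y s := by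
  set F : ℝ → ℝ → ℝ := fun y s => (Ioi y).indicator (H y) s
  have hF : Function.uncurry F = {p : ℝ × ℝ | p.1 < p.2}.indicator (Function.uncurry H) := by
    ext ⟨y, s⟩
    simp [F, Set.indicator_apply]
  have hInt : Integrable (Function.uncurry F)
      ((volume.restrict (Ioc a b)).prod (volume.restrict (Ioc a b))) := by
    rw [hF, Measure.prod_restrict, ← Measure.volume_eq_prod]
    refine Integrable.indicator ?_ (measurableSet_lt measurable_fst measurable_snd)
    exact (hH.continuousOn.integrableOn_compact (isCompact_Icc.prod isCompact_Icc)).mono_set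
      (prod_mono Ioc_subset_Icc_self Ioc_subset_Icc_self)
  have hleft : ∫ y in a..b, ∫ s in y..b, H y s = ∫ y in Ioc a b, ∫ s in Ioc a b, F y s := by
    rw [intervalIntegral.integral_of_le hab]
    refine setIntegral_congr_fun measurableSet_Ioc fun y hy => ?_
    rw [setIntegral_indicator measurableSet_Ioi, Ioc_inter_Ioi, max_eq_right hy.1.le,
      intervalIntegral.integral_of_le hy.2]
  have hright : ∫ s in Ioc a b, ∫ y in Ioc a b, F y s = ∫ s in a..b, ∫ y in a..s, H y s := by
    rw [intervalIntegral.integral_of_le hab]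
    refine setIntegral_congr_fun measurableSet_Ioc fun s hs => ?_
    have hslice : (fun y => F y s) = (Iio s).indicator fun y => H y s := by
      ext y
      simp [F, Set.indicator_apply]
    have hinter : Ioc a b ∩ Iio s = Ioo a s := by
      ext y
      simp only [mem_inter_iff, mem_Ioc, mem_Iio, mem_Ioo]
      constructor
      · exact fun h => ⟨h.1.1, h.2⟩
      · exact fun h => ⟨⟨h.1, h.2.le.trans hs.2⟩, h.2⟩
    rw [hslice, setIntegral_indicator measurableSet_Iio, hinter, ← integral_Ioc_eq_integral_Ioo,
      intervalIntegral.integral_of_le hs.1.le]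
  rw [hleft, integral_integral_swap hInt, hright]

section HalfLineFlux

variable {W : ℝ → ℝ → ℝ} {M : ℝ}

theorem continuous_setIntegral_Ioi_of_eq_zero (hW : Continuous (Function.uncurry W))
    (hWM : ∀ y z, M ≤ z → W y z = 0) (t : ℝ) : Continuous fun y => ∫ z in Ioi t, W y z := by
  have hrestrict : (fun y => ∫ z in Ioi t, W y z) = fun y => ∫ z in t..M, W y z :=
    funext fun y => setIntegral_Ioi_eq_intervalIntegral_of_eq_zero (by fun_prop) (hWM y) t
  rw [hrestrict]
  exact intervalIntegral.continuous_parametric_intervalIntegral_of_continuous' hW t M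

theorem integral_setIntegral_Ioi_sub_eq_sub_integral_antidiagonal
    (hW : Continuous (Function.uncurry W)) (hWM : ∀ y z, M ≤ z → W y z = 0) {b : ℝ} (hb : 0 ≤ b) :
    ∫ y in 0..b, ∫ z in Ioi (b - y), W y z
      = (∫ y in 0..b, ∫ z in Ioi 0, W y z) - ∫ s in 0..b, ∫ y in 0..s, W y (s - y) := by
  have hinner : ∀ y, ∫ z in Ioi (b - y), W y z
      = (∫ z in Ioi 0, W y z) - ∫ z in 0..b - y, W y z := fun y => by
    rw [setIntegral_Ioi_eq_intervalIntegral_of_eq_zero (by fun_prop) (hWM y),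
      setIntegral_Ioi_eq_intervalIntegral_of_eq_zero (by fun_prop) (hWM y),
      intervalIntegral.integral_interval_sub_left]
    all_goals exact Continuous.intervalIntegrable (by fun_prop) _ _
  have hshift : ∀ y, ∫ z in 0..b - y, W y z = ∫ s in y..b, W y (s - y) := fun y => by
    rw [intervalIntegral.integral_comp_sub_right, sub_self]
  have hcont : Continuous fun y => ∫ z in 0..b - y, W y z :=
    intervalIntegral.continuous_parametric_intervalIntegral_of_continuous hW (by fun_prop)
  simp_rw [hinner]
  rw [intervalIntegral.integral_sub
      ((continuous_setIntegral_Ioi_of_eq_zero hW hWM 0).intervalIntegrable 0 b)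
      (hcont.intervalIntegrable 0 b)]
  simp_rw [hshift]
  rw [integral_integral_swap_triangle (H := fun y s => W y (s - y)) (by fun_prop) hb]

theorem hasDerivAt_integral_setIntegral_Ioi_sub (hW : Continuous (Function.uncurry W))
    (hWM : ∀ y z, M ≤ z → W y z = 0) {x : ℝ} (hx : 0 < x) :
    HasDerivAt (fun b => ∫ y in 0..b, ∫ z in Ioi (b - y), W y z)
      ((∫ z in Ioi 0, W x z) - ∫ y in 0..x, W y (x - y)) x := by
  have hcont : Continuous fun s => ∫ y in 0..s, W y (s - y) :=
    intervalIntegral.continuous_parametric_intervalIntegral_of_continuous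
      (f := fun s y => W y (s - y)) (by fun_prop) continuous_id
  have hrep : (fun b => ∫ y in 0..b, ∫ z in Ioi (b - y), W y z) =ᶠ[𝓝 x]
      fun b => (∫ y in 0..b, ∫ z in Ioi 0, W y z) - ∫ s in 0..b, ∫ y in 0..s, W y (s - y) :=
    eventually_of_mem (Ioi_mem_nhds hx) fun b hb =>
      integral_setIntegral_Ioi_sub_eq_sub_integral_antidiagonal hW hWM hb.le
  rw [hrep.hasDerivAt_iff]
  have hf := continuous_setIntegral_Ioi_of_eq_zero hW hWM 0
  exact (hf.integral_hasStrictDerivAt 0 x).hasDerivAt.sub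
    (hcont.integral_hasStrictDerivAt 0 x).hasDerivAt

end HalfLineFlux

theorem continuous_comp_max_zero {f : ℝ → ℝ} (hf : ContinuousOn f (Ici 0)) :
    Continuous fun y => f (max y 0) :=
  hf.comp_continuous (by fun_prop) fun y => le_max_right y 0

theorem continuous_comp_max_zero₂ {k : ℝ → ℝ → ℝ}
    (hk : ContinuousOn (fun p : ℝ × ℝ => k p.1 p.2) (Ici 0 ×ˢ Ici 0)) :
    Continuous fun p : ℝ × ℝ => k (max p.1 0) (max p.2 0) :=
  hk.comp_continuous (f := fun p : ℝ × ℝ => (max p.1 0, max p.2 0)) (by fun_prop)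
    fun p => ⟨le_max_right p.1 0, le_max_right p.2 0⟩

/-- The integrand of `coagFlux`, with both arguments of `kc` and `u` clamped to `[0, ∞)` so that
it is continuous on all of `ℝ²`. -/
noncomputable def coagFluxIntegrand (kc : ℝ → ℝ → ℝ) (u : ℝ → ℝ) (y z : ℝ) : ℝ :=
  y * kc (max y 0) (max z 0) * u (max y 0) * u (max z 0)

section CoagFluxIntegrand

variable {kc : ℝ → ℝ → ℝ} {u : ℝ → ℝ}

theorem coagFluxIntegrand_of_nonneg {y z : ℝ} (hy : 0 ≤ y) (hz : 0 ≤ z) :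
    coagFluxIntegrand kc u y z = y * kc y z * u y * u z := by
  simp [coagFluxIntegrand, hy, hz]

theorem continuous_coagFluxIntegrand
    (hkc : ContinuousOn (fun p : ℝ × ℝ => kc p.1 p.2) (Ici 0 ×ˢ Ici 0))
    (hu : ContinuousOn u (Ici 0)) : Continuous (Function.uncurry (coagFluxIntegrand kc u)) := by
  have hu' := continuous_comp_max_zero hu
  exact ((continuous_fst.mul (continuous_comp_max_zero₂ hkc)).mul (hu'.comp continuous_fst)).mul
    (hu'.comp continuous_snd)

theorem coagFluxIntegrand_eq_zero {M : ℝ} (hu : ∀ x ≥ M, u x = 0) (y : ℝ) {z : ℝ} (hz : M ≤ z) :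
    coagFluxIntegrand kc u y z = 0 := by
  simp [coagFluxIntegrand, hu (max z 0) (le_max_of_le_left hz)]

theorem coagFlux_eq_integral_coagFluxIntegrand {b : ℝ} (hb : 0 ≤ b) :
    coagFlux kc u b = ∫ y in 0..b, ∫ z in Ioi (b - y), coagFluxIntegrand kc u y z := by
  refine intervalIntegral.integral_congr fun y hy => ?_
  rw [uIcc_of_le hb] at hy
  refine setIntegral_congr_fun measurableSet_Ioi fun z hz => ?_
  exact (coagFluxIntegrand_of_nonneg hy.1 (by linarith [hy.2, mem_Ioi.1 hz])).symm

theorem setIntegral_Ioi_coagFluxIntegrand {x : ℝ} (hx : 0 ≤ x) :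
    ∫ z in Ioi 0, coagFluxIntegrand kc u x z = x * u x * ∫ z in Ioi 0, kc x z * u z := by
  rw [← integral_const_mul]
  refine setIntegral_congr_fun measurableSet_Ioi fun z hz => ?_
  rw [coagFluxIntegrand_of_nonneg hx (le_of_lt hz)]
  ring

theorem integral_coagFluxIntegrand_antidiagonal
    (hkc : ContinuousOn (fun p : ℝ × ℝ => kc p.1 p.2) (Ici 0 ×ˢ Ici 0))
    (hsymm : ∀ x ∈ Ici (0:ℝ), ∀ y ∈ Ici (0:ℝ), kc x y = kc y x)
    (hu : ContinuousOn u (Ici 0)) {x : ℝ} (hx : 0 ≤ x) :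
    ∫ y in 0..x, coagFluxIntegrand kc u y (x - y)
      = x / 2 * ∫ y in 0..x, kc y (x - y) * u y * u (x - y) := by
  set φ : ℝ → ℝ := fun y => kc (max y 0) (max (x - y) 0) * u (max y 0) * u (max (x - y) 0)
  have hk := continuous_comp_max_zero₂ hkc
  have hu' := continuous_comp_max_zero hu
  have hφ : Continuous φ :=
    ((hk.comp (f := fun y => (y, x - y)) (by fun_prop)).mul hu').mul
      (hu'.comp (f := fun y => x - y) (by fun_prop))
  have hφsymm : ∀ y, φ (0 + x - y) = φ y := fun y => by
    simp only [φ, zero_add, sub_sub_cancel]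
    rw [hsymm _ (le_max_right (x - y) 0) _ (le_max_right y 0)]
    ring
  have hφeq : ∫ y in 0..x, φ y = ∫ y in 0..x, kc y (x - y) * u y * u (x - y) := by
    refine intervalIntegral.integral_congr fun y hy => ?_
    rw [uIcc_of_le hx] at hy
    simp [φ, hy.1, hy.2]
  calc ∫ y in 0..x, coagFluxIntegrand kc u y (x - y)
      = ∫ y in 0..x, y * φ y := by
        congr 1 with y
        simp only [coagFluxIntegrand, φ]
        ring
    _ = x / 2 * ∫ y in 0..x, φ y := by
        rw [integral_id_mul_of_symm hφ hφsymm, zero_add]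
    _ = _ := by rw [hφeq]

end CoagFluxIntegrand

/-- the coagulation operator admits the conservative form
`x·Q_c(u) = −∂_x C(u)` on `(0,∞)`. -/
theorem coagulation_conservative_form
    (kc : ℝ → ℝ → ℝ) (u : ℝ → ℝ)
    (hkc_cont : ContinuousOn (fun p : ℝ × ℝ => kc p.1 p.2) (Set.Ici 0 ×ˢ Set.Ici 0))
    (hkc_symm : ∀ x ∈ Set.Ici (0:ℝ), ∀ y ∈ Set.Ici (0:ℝ), kc x y = kc y x)
    (hu_cont : ContinuousOn u (Set.Ici 0))
    (hu_supp : ∃ M : ℝ, 0 < M ∧ ∀ x ≥ M, u x = 0) :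
    ∀ x > (0:ℝ), HasDerivAt (coagFlux kc u) (-(x * Qc kc u x)) x := by
  obtain ⟨M, -, hu_zero⟩ := hu_supp
  intro x hx
  have hflux : coagFlux kc u =ᶠ[𝓝 x]
      fun b => ∫ y in 0..b, ∫ z in Ioi (b - y), coagFluxIntegrand kc u y z :=
    eventually_of_mem (Ioi_mem_nhds hx) fun b hb => coagFlux_eq_integral_coagFluxIntegrand hb.le
  have hderiv := hasDerivAt_integral_setIntegral_Ioi_sub
    (continuous_coagFluxIntegrand hkc_cont hu_cont) (coagFluxIntegrand_eq_zero hu_zero) hx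
  rw [setIntegral_Ioi_coagFluxIntegrand hx.le,
    integral_coagFluxIntegrand_antidiagonal hkc_cont hkc_symm hu_cont hx.le] at hderiv
  have hvalue : -(x * Qc kc u x) = (x * u x * ∫ z in Ioi 0, kc x z * u z)
      - x / 2 * ∫ y in 0..x, kc y (x - y) * u y * u (x - y) := by
    rw [Qc]
    ring
  rwa [hflux.hasDerivAt_iff, hvalue]
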